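/- Let integers n ≥ 1, let λ > 0, and define G(V) = (1/√(λ+1)) · (((n−d)(λ+1) + V) / ((λ+1)(n−d+V)))^{−(n−d+1)/2} for V ≥ 0, where d ≥ 0 is an integer with n > d. Then log G is strictly concave in V on [0, ∞); explicitly, d²/dV² log G(V) = −((n−d+1)/2) · ((n−d)λ / (V + (n−d)(λ+1))²) · (2/(V + (n−d)) + (n−d)λ/(V + (n−d))²) < 0. -/

import Mathlib

/-- The Gaussian mixture martingale value in the structured linear setting,
as a function of the directional self-normalized deviation V; λ plays the
role of Σ_t^{-1} and d is the dimension of the linear model. -/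
noncomputable def GmartL (n d : ℕ) (lam V : ℝ) : ℝ :=
  (1 / Real.sqrt (lam + 1)) *
    ((((n : ℝ) - (d : ℝ)) * (lam + 1) + V) / ((lam + 1) * ((n : ℝ) - (d : ℝ) + V))) ^
      (-(((n : ℝ) - (d : ℝ) + 1)) / 2)

/-- for integers n ≥ 1, d ≥ 0 with n > d and λ > 0,
V ↦ log G(V) is strictly concave on [0,∞), with second derivative
−((n−d+1)/2)·((n−d)λ/(V+(n−d)(λ+1))²)·(2/(V+(n−d)) + (n−d)λ/(V+(n−d))²) < 0. -/
theorem stmt4 (n d : ℕ) (hn : 1 ≤ n) (hd : d < n) (lam : ℝ) (hlam : 0 < lam) :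
    StrictConcaveOn ℝ (Set.Ici (0 : ℝ)) (fun V : ℝ => Real.log (GmartL n d lam V)) ∧
    ∀ V : ℝ, 0 ≤ V →
      deriv (deriv (fun V : ℝ => Real.log (GmartL n d lam V))) V
          = -(((n : ℝ) - (d : ℝ) + 1) / 2) *
              (((n : ℝ) - (d : ℝ)) * lam / (V + ((n : ℝ) - (d : ℝ)) * (lam + 1)) ^ 2) *
              (2 / (V + ((n : ℝ) - (d : ℝ))) +
                ((n : ℝ) - (d : ℝ)) * lam / (V + ((n : ℝ) - (d : ℝ))) ^ 2) ∧
      -(((n : ℝ) - (d : ℝ) + 1) / 2) *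
          (((n : ℝ) - (d : ℝ)) * lam / (V + ((n : ℝ) - (d : ℝ)) * (lam + 1)) ^ 2) *
          (2 / (V + ((n : ℝ) - (d : ℝ))) +
            ((n : ℝ) - (d : ℝ)) * lam / (V + ((n : ℝ) - (d : ℝ))) ^ 2) < 0 := by
  have hdn : (d : ℝ) < (n : ℝ) := by exact_mod_cast hd
  set m : ℝ := (n : ℝ) - (d : ℝ) with hmdef
  have hm : 0 < m := by simp [hmdef]; linarith
  have hl1 : (0 : ℝ) < lam + 1 := by linarith
  set U : Set ℝ := Set.Ioi (-m) with hUdef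
  have hUopen : IsOpen U := isOpen_Ioi
  have hBpos : ∀ V ∈ U, 0 < m + V := fun V hV => by
    simp only [hUdef, Set.mem_Ioi] at hV; linarith
  have hApos : ∀ V ∈ U, 0 < m * (lam + 1) + V := by
    intro V hV
    have hB := hBpos V hV
    nlinarith
  -- the explicit log form
  set f : ℝ → ℝ := fun V => Real.log (1 / Real.sqrt (lam + 1)) +
      (-(m + 1) / 2) * (Real.log (m * (lam + 1) + V) -
        (Real.log (lam + 1) + Real.log (m + V))) with hfdef
  have hEq : ∀ V ∈ U, Real.log (GmartL n d lam V) = f V := by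
    intro V hV
    have hA := hApos V hV
    have hB := hBpos V hV
    have hbase : 0 < (m * (lam + 1) + V) / ((lam + 1) * (m + V)) :=
      div_pos hA (mul_pos hl1 hB)
    have hc : (0 : ℝ) < 1 / Real.sqrt (lam + 1) := by positivity
    simp only [GmartL, ← hmdef, hfdef]
    rw [Real.log_mul (ne_of_gt hc) (ne_of_gt (Real.rpow_pos_of_pos hbase _)),
      Real.log_rpow hbase, Real.log_div (ne_of_gt hA) (ne_of_gt (mul_pos hl1 hB)),
      Real.log_mul (ne_of_gt hl1) (ne_of_gt hB)]
    try ring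
  -- first derivative
  set f' : ℝ → ℝ := fun V => (-(m + 1) / 2) *
      (1 / (m * (lam + 1) + V) - 1 / (m + V)) with hf'def
  have hder1 : ∀ V ∈ U, HasDerivAt f (f' V) V := by
    intro V hV
    have hA := hApos V hV
    have hB := hBpos V hV
    have h1 : HasDerivAt (fun V : ℝ => Real.log (m * (lam + 1) + V))
        (1 / (m * (lam + 1) + V)) V := by
      simpa using (((hasDerivAt_id V).const_add (m * (lam + 1))).log (ne_of_gt hA))
    have h2 : HasDerivAt (fun V : ℝ => Real.log (m + V)) (1 / (m + V)) V := by
      simpa using (((hasDerivAt_id V).const_add m).log (ne_of_gt hB))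
    have h3 := ((h1.sub ((hasDerivAt_const V (Real.log (lam + 1))).add h2)).const_mul
        (-(m + 1) / 2)).const_add (Real.log (1 / Real.sqrt (lam + 1)))
    refine h3.congr_deriv ?_
    simp only [hf'def]
    try ring
  -- second derivative
  set f'' : ℝ → ℝ := fun V => (-(m + 1) / 2) *
      (-(1 / (m * (lam + 1) + V) ^ 2) + 1 / (m + V) ^ 2) with hf''def
  have hder2 : ∀ V ∈ U, HasDerivAt f' (f'' V) V := by
    intro V hV
    have hA := hApos V hV
    have hB := hBpos V hV
    have h1 : HasDerivAt (fun V : ℝ => 1 / (m * (lam + 1) + V))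
        (-(1 / (m * (lam + 1) + V) ^ 2)) V := by
      have h := ((hasDerivAt_id V).const_add (m * (lam + 1))).inv (ne_of_gt hA)
      simpa [one_div, neg_div, Pi.inv_def] using h
    have h2 : HasDerivAt (fun V : ℝ => 1 / (m + V)) (-(1 / (m + V) ^ 2)) V := by
      have h := ((hasDerivAt_id V).const_add m).inv (ne_of_gt hB)
      simpa [one_div, neg_div, Pi.inv_def] using h
    have h3 := (h1.sub h2).const_mul (-(m + 1) / 2)
    refine h3.congr_deriv ?_
    simp only [hf''def]
    try ring
  -- log ∘ GmartL agrees with f near each point of U, hence so do derivatives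
  have hEqd : ∀ V ∈ U, deriv (fun V : ℝ => Real.log (GmartL n d lam V)) V = f' V := by
    intro V hV
    have hev : (fun V : ℝ => Real.log (GmartL n d lam V)) =ᶠ[nhds V] f :=
      Filter.eventuallyEq_of_mem (hUopen.mem_nhds hV) hEq
    rw [hev.deriv_eq, (hder1 V hV).deriv]
  have hEqd2 : ∀ V ∈ U,
      deriv (deriv (fun V : ℝ => Real.log (GmartL n d lam V))) V = f'' V := by
    intro V hV
    have hev : deriv (fun V : ℝ => Real.log (GmartL n d lam V)) =ᶠ[nhds V] f' :=
      Filter.eventuallyEq_of_mem (hUopen.mem_nhds hV) hEqd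
    rw [hev.deriv_eq, (hder2 V hV).deriv]
  have hsub : Set.Ici (0 : ℝ) ⊆ U := fun x hx => by
    simp only [hUdef, Set.mem_Ioi]
    have : (0 : ℝ) ≤ x := hx
    linarith
  -- algebraic identity for the second derivative
  have halg : ∀ V : ℝ, 0 ≤ V →
      f'' V = -((m + 1) / 2) * (m * lam / (V + m * (lam + 1)) ^ 2) *
        (2 / (V + m) + m * lam / (V + m) ^ 2) := by
    intro V hV
    have hA := hApos V (hsub hV)
    have hB := hBpos V (hsub hV)
    have hA' : V + m * (lam + 1) ≠ 0 := by intro h; nlinarith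
    have hB' : V + m ≠ 0 := by intro h; nlinarith
    have hA'' : m * (lam + 1) + V ≠ 0 := ne_of_gt hA
    have hB'' : m + V ≠ 0 := ne_of_gt hB
    simp only [hf''def]
    field_simp
    ring
  -- negativity of the explicit second derivative
  have hneg : ∀ V : ℝ, 0 ≤ V →
      -((m + 1) / 2) * (m * lam / (V + m * (lam + 1)) ^ 2) *
        (2 / (V + m) + m * lam / (V + m) ^ 2) < 0 := by
    intro V hV
    have hA : 0 < V + m * (lam + 1) := by nlinarith
    have hB : 0 < V + m := by linarith
    have h1 : 0 < m * lam / (V + m * (lam + 1)) ^ 2 := by positivity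
    have h2 : 0 < 2 / (V + m) + m * lam / (V + m) ^ 2 := by positivity
    have h3 : 0 < (m + 1) / 2 := by linarith
    nlinarith [mul_pos (mul_pos h3 h1) h2]
  constructor
  · apply strictConcaveOn_of_deriv2_neg (convex_Ici 0)
    · intro x hx
      have hev : (fun V : ℝ => Real.log (GmartL n d lam V)) =ᶠ[nhds x] f :=
        Filter.eventuallyEq_of_mem (hUopen.mem_nhds (hsub hx)) hEq
      exact ((hder1 x (hsub hx)).congr_of_eventuallyEq
        hev).differentiableAt.continuousAt.continuousWithinAt
    · intro x hx
      rw [interior_Ici] at hx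
      have hx' : x ∈ Set.Ici (0 : ℝ) := Set.mem_Ici.mpr (le_of_lt hx)
      have : deriv^[2] (fun V : ℝ => Real.log (GmartL n d lam V)) x
          = deriv (deriv (fun V : ℝ => Real.log (GmartL n d lam V))) x := by
        simp [Function.iterate_succ, Function.iterate_one]
      rw [this, hEqd2 x (hsub hx'), halg x hx']
      exact hneg x hx'
  · intro V hV
    refine ⟨?_, by simpa using hneg V hV⟩
    rw [hEqd2 V (hsub hV), halg V hV]
    try ring
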